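/- Let ρ be irrational with 0 < ρ < r_{λ,μ} and δ = δ(λ,μ,ρ). Then Σ_{l≥1} λ^{l−1} μ^{⌊lρ⌋} = (1 + (μ−1)σ)/(1−λ) and δ − μ(λ+δ−1) = (1−λ)/(1+(μ−1)σ); consequently (δ − μ(λ+δ−1)) Σ_{l≥1} λ^{l−1} μ^{⌊lρ⌋} = 1. -/

import Mathlib

/-! With `a_l = ⌊(l+1)ρ⌋` and `0 < ρ < 1` we have `a_0 = 0` and `a_{l+1} - a_l ∈ {0, 1}`, so the terms
`f_l = λ^l μ^{a_l}` satisfy `f_{l+1} = λ f_l + (μ - 1)(a_{l+1} - a_l) λ^{l+1} μ^{a_l}`. The hypothesis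
`ρ < r_{λ,μ}` makes `λ · max(μ,1)^ρ < 1`, so `f` is dominated by a geometric series, and summing the
recursion gives `(1 - λ) Σ f = 1 + (μ - 1) σ`. The rest is algebra in `σ`. -/

/-- σ(λ,μ,ρ) = Σ_{k≥1} (⌊(k+1)ρ⌋ − ⌊kρ⌋) λ^k μ^{⌊kρ⌋}. -/
noncomputable def sigmaFn (lam mu rho : ℝ) : ℝ :=
  ∑' k : ℕ, ((⌊((k : ℝ) + 2) * rho⌋ - ⌊((k : ℝ) + 1) * rho⌋ : ℤ) : ℝ) *
    lam ^ (k + 1) * mu ^ ⌊((k : ℝ) + 1) * rho⌋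

/-- δ(λ,μ,ρ) = (1−λ)(1+μσ)/(1+(μ−1)σ). -/
noncomputable def deltaFn (lam mu rho : ℝ) : ℝ :=
  (1 - lam) * (1 + mu * sigmaFn lam mu rho) / (1 + (mu - 1) * sigmaFn lam mu rho)


open Real

theorem Int.floor_add_eq_or_eq_add_one {x r : ℝ} (hr0 : 0 ≤ r) (hr1 : r ≤ 1) :
    ⌊x + r⌋ = ⌊x⌋ ∨ ⌊x + r⌋ = ⌊x⌋ + 1 := by
  have hlo : ⌊x⌋ ≤ ⌊x + r⌋ := Int.floor_le_floor (by linarith)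
  have hhi : ⌊x + r⌋ ≤ ⌊x⌋ + 1 := by
    rw [← Int.floor_add_one]; exact Int.floor_le_floor (by linarith)
  omega

theorem zpow_le_max_one_rpow {mu x : ℝ} {n : ℤ} (hmu : 0 < mu) (hn : 0 ≤ n) (hnx : (n : ℝ) ≤ x) :
    mu ^ n ≤ max mu 1 ^ x := by
  lift n to ℕ using hn
  calc mu ^ (n : ℤ) = mu ^ n := zpow_natCast mu n
    _ ≤ max mu 1 ^ n := pow_le_pow_left₀ hmu.le (le_max_left _ _) n
    _ = max mu 1 ^ (n : ℝ) := (rpow_natCast _ n).symm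
    _ ≤ max mu 1 ^ x := rpow_le_rpow_of_exponent_le (le_max_right _ _) (mod_cast hnx)

theorem lt_one_and_mul_max_rpow_lt_one {lam mu rho : ℝ} (hlam0 : 0 < lam) (hlam1 : lam < 1)
    (hrho : rho < if lam * mu < 1 then 1 else -log lam / log mu) :
    rho < 1 ∧ lam * max mu 1 ^ rho < 1 := by
  split_ifs at hrho with hlm
  · refine ⟨hrho, ?_⟩
    rcases le_or_gt mu 1 with hmu1 | hmu1
    · rw [max_eq_right hmu1, one_rpow, mul_one]; exact hlam1
    · rw [max_eq_left hmu1.le]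
      calc lam * mu ^ rho ≤ lam * mu := by
            gcongr; exact rpow_le_self_of_one_le hmu1.le hrho.le
        _ < 1 := hlm
  · push Not at hlm
    have hmu1 : 1 < mu := by nlinarith
    have hlogmu : 0 < log mu := log_pos hmu1
    have hlog : -log lam ≤ log mu := by
      have := log_nonneg hlm
      rw [log_mul hlam0.ne' (by linarith)] at this
      linarith
    have hexp : rho * log mu < -log lam := by rwa [lt_div_iff₀ hlogmu] at hrho
    refine ⟨hrho.trans_le ((div_le_one hlogmu).2 hlog), ?_⟩
    rw [max_eq_left hmu1.le, rpow_def_of_pos (by linarith), mul_comm (log mu)]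
    calc lam * exp (rho * log mu) < lam * exp (-log lam) := by gcongr
      _ = 1 := by rw [exp_neg, exp_log hlam0, mul_inv_cancel₀ hlam0.ne']

section UnitSteps

variable {a : ℕ → ℤ} {lam mu : ℝ}

theorem pow_mul_zpow_succ_of_step (hmu : mu ≠ 0) (l : ℕ)
    (ha : a (l + 1) = a l ∨ a (l + 1) = a l + 1) :
    lam ^ (l + 1) * mu ^ a (l + 1) =
      lam * (lam ^ l * mu ^ a l) +
        (mu - 1) * (((a (l + 1) - a l : ℤ) : ℝ) * lam ^ (l + 1) * mu ^ a l) := by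
  rcases ha with h | h <;> rw [h]
  · simp only [sub_self, Int.cast_zero]; ring
  · rw [zpow_add_one₀ hmu]; push_cast; ring

theorem summable_step_terms (hlam : 0 ≤ lam) (hmu : 0 < mu)
    (ha : ∀ l, a (l + 1) = a l ∨ a (l + 1) = a l + 1)
    (hf : Summable fun l => lam ^ l * mu ^ a l) :
    Summable fun k => ((a (k + 1) - a k : ℤ) : ℝ) * lam ^ (k + 1) * mu ^ a k := by
  have hd (k : ℕ) : 0 ≤ ((a (k + 1) - a k : ℤ) : ℝ) ∧ ((a (k + 1) - a k : ℤ) : ℝ) ≤ 1 := by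
    rcases ha k with h | h <;> simp [h]
  have hterm (k : ℕ) : ((a (k + 1) - a k : ℤ) : ℝ) * lam ^ (k + 1) * mu ^ a k =
      ((a (k + 1) - a k : ℤ) : ℝ) * (lam * (lam ^ k * mu ^ a k)) := by ring
  have hf0 (k : ℕ) : 0 ≤ lam * (lam ^ k * mu ^ a k) := by positivity
  refine (hf.mul_left lam).of_nonneg_of_le (fun k => ?_) (fun k => ?_) <;> rw [hterm]
  · exact mul_nonneg (hd k).1 (hf0 k)
  · exact mul_le_of_le_one_left (hf0 k) (hd k).2

theorem one_sub_mul_tsum_pow_mul_zpow (hlam : 0 ≤ lam) (hmu : 0 < mu) (ha0 : a 0 = 0)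
    (ha : ∀ l, a (l + 1) = a l ∨ a (l + 1) = a l + 1)
    (hf : Summable fun l => lam ^ l * mu ^ a l) :
    (1 - lam) * ∑' l, lam ^ l * mu ^ a l =
      1 + (mu - 1) * ∑' k, ((a (k + 1) - a k : ℤ) : ℝ) * lam ^ (k + 1) * mu ^ a k := by
  have hs := summable_step_terms hlam hmu ha hf
  have hsplit := hf.tsum_eq_zero_add
  rw [tsum_congr fun l => pow_mul_zpow_succ_of_step hmu.ne' l (ha l),
    (hf.mul_left lam).tsum_add (hs.mul_left _), tsum_mul_left, tsum_mul_left, ha0] at hsplit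
  simp only [pow_zero, zpow_zero, mul_one] at hsplit
  linarith

end UnitSteps

section FloorSequence

variable {lam mu rho : ℝ}

theorem summable_pow_mul_zpow_floor (hlam : 0 ≤ lam) (hmu : 0 < mu) (hrho : 0 ≤ rho)
    (hq : lam * max mu 1 ^ rho < 1) :
    Summable fun l : ℕ => lam ^ l * mu ^ ⌊((l : ℝ) + 1) * rho⌋ := by
  set P := max mu 1 ^ rho
  have hP : 0 ≤ P := by positivity
  refine ((summable_geometric_of_lt_one (by positivity) hq).mul_left P).of_nonneg_of_le
    (fun l => by positivity) (fun l => ?_)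
  have hfloor : mu ^ ⌊((l : ℝ) + 1) * rho⌋ ≤ P ^ (l + 1) := by
    calc mu ^ ⌊((l : ℝ) + 1) * rho⌋ ≤ max mu 1 ^ (((l : ℝ) + 1) * rho) :=
          zpow_le_max_one_rpow hmu (Int.floor_nonneg.2 (by positivity)) (Int.floor_le _)
      _ = P ^ (l + 1) := by
          rw [mul_comm, rpow_mul (by positivity), ← Nat.cast_succ, rpow_natCast]
  calc lam ^ l * mu ^ ⌊((l : ℝ) + 1) * rho⌋ ≤ lam ^ l * P ^ (l + 1) := by gcongr
    _ = P * (lam * P) ^ l := by ring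

theorem floor_succ_mul_eq_or (hrho0 : 0 ≤ rho) (hrho1 : rho ≤ 1) (l : ℕ) :
    ⌊(((l + 1 : ℕ) : ℝ) + 1) * rho⌋ = ⌊((l : ℝ) + 1) * rho⌋ ∨
      ⌊(((l + 1 : ℕ) : ℝ) + 1) * rho⌋ = ⌊((l : ℝ) + 1) * rho⌋ + 1 := by
  have : (((l + 1 : ℕ) : ℝ) + 1) * rho = ((l : ℝ) + 1) * rho + rho := by push_cast; ring
  rw [this]
  exact Int.floor_add_eq_or_eq_add_one hrho0 hrho1

theorem sigmaFn_eq_tsum :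
    sigmaFn lam mu rho =
      ∑' k : ℕ, ((⌊(((k + 1 : ℕ) : ℝ) + 1) * rho⌋ - ⌊((k : ℝ) + 1) * rho⌋ : ℤ) : ℝ) *
        lam ^ (k + 1) * mu ^ ⌊((k : ℝ) + 1) * rho⌋ := by
  unfold sigmaFn
  congr! 8
  push_cast; ring

theorem one_sub_mul_tsum_eq_one_add_sigmaFn (hlam : 0 ≤ lam) (hmu : 0 < mu) (hrho0 : 0 ≤ rho)
    (hrho1 : rho < 1) (hf : Summable fun l : ℕ => lam ^ l * mu ^ ⌊((l : ℝ) + 1) * rho⌋) :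
    (1 - lam) * ∑' l : ℕ, lam ^ l * mu ^ ⌊((l : ℝ) + 1) * rho⌋ =
      1 + (mu - 1) * sigmaFn lam mu rho := by
  rw [sigmaFn_eq_tsum]
  refine one_sub_mul_tsum_pow_mul_zpow (a := fun l : ℕ => ⌊((l : ℝ) + 1) * rho⌋) hlam hmu ?_
    (floor_succ_mul_eq_or hrho0 hrho1.le) hf
  simpa using Int.floor_eq_zero_iff.2 ⟨hrho0, hrho1⟩

end FloorSequence

theorem deltaFn_sub_mul_eq {lam mu rho : ℝ} (hD : 1 + (mu - 1) * sigmaFn lam mu rho ≠ 0) :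
    deltaFn lam mu rho - mu * (lam + deltaFn lam mu rho - 1) =
      (1 - lam) / (1 + (mu - 1) * sigmaFn lam mu rho) := by
  rw [deltaFn, eq_div_iff hD]
  linear_combination (1 - mu) * div_mul_cancel₀ ((1 - lam) * (1 + mu * sigmaFn lam mu rho)) hD

theorem stmt18_general (lam mu rho : ℝ) (hlam0 : 0 < lam) (hlam1 : lam < 1) (hmu : 0 < mu)
    (hrho0 : 0 < rho)
    (hrho1 : rho < if lam * mu < 1 then 1 else -Real.log lam / Real.log mu) :
    (∑' l : ℕ, lam ^ l * mu ^ ⌊((l : ℝ) + 1) * rho⌋) =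
        (1 + (mu - 1) * sigmaFn lam mu rho) / (1 - lam) ∧
    deltaFn lam mu rho - mu * (lam + deltaFn lam mu rho - 1) =
        (1 - lam) / (1 + (mu - 1) * sigmaFn lam mu rho) ∧
    (deltaFn lam mu rho - mu * (lam + deltaFn lam mu rho - 1)) *
        (∑' l : ℕ, lam ^ l * mu ^ ⌊((l : ℝ) + 1) * rho⌋) = 1 := by
  obtain ⟨hrho_lt_one, hq⟩ := lt_one_and_mul_max_rpow_lt_one hlam0 hlam1 hrho1
  have hf := summable_pow_mul_zpow_floor hlam0.le hmu hrho0.le hq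
  have hmain := one_sub_mul_tsum_eq_one_add_sigmaFn hlam0.le hmu hrho0.le hrho_lt_one hf
  have hpos : 0 < ∑' l : ℕ, lam ^ l * mu ^ ⌊((l : ℝ) + 1) * rho⌋ :=
    hf.tsum_pos (fun l => by positivity) 0 (by positivity)
  have hD : 1 + (mu - 1) * sigmaFn lam mu rho ≠ 0 := by
    rw [← hmain]; exact (mul_pos (sub_pos.2 hlam1) hpos).ne'
  have hsum : (∑' l : ℕ, lam ^ l * mu ^ ⌊((l : ℝ) + 1) * rho⌋) =
      (1 + (mu - 1) * sigmaFn lam mu rho) / (1 - lam) := by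
    rw [← hmain, mul_div_cancel_left₀ _ (sub_pos.2 hlam1).ne']
  refine ⟨hsum, deltaFn_sub_mul_eq hD, ?_⟩
  rw [deltaFn_sub_mul_eq hD, hsum, div_mul_div_comm, mul_comm, div_self]
  exact mul_ne_zero hD (sub_pos.2 hlam1).ne'

theorem stmt18 (lam mu rho : ℝ) (hlam0 : 0 < lam) (hlam1 : lam < 1) (hmu : 0 < mu)
    (hrho0 : 0 < rho)
    (hrho1 : rho < if lam * mu < 1 then 1 else -Real.log lam / Real.log mu)
    (hirr : Irrational rho) :
    (∑' l : ℕ, lam ^ l * mu ^ ⌊((l : ℝ) + 1) * rho⌋) =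
        (1 + (mu - 1) * sigmaFn lam mu rho) / (1 - lam) ∧
    deltaFn lam mu rho - mu * (lam + deltaFn lam mu rho - 1) =
        (1 - lam) / (1 + (mu - 1) * sigmaFn lam mu rho) ∧
    (deltaFn lam mu rho - mu * (lam + deltaFn lam mu rho - 1)) *
        (∑' l : ℕ, lam ^ l * mu ^ ⌊((l : ℝ) + 1) * rho⌋) = 1 :=
  stmt18_general lam mu rho hlam0 hlam1 hmu hrho0 hrho1
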